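/- Rodrigues formula on B(1): for every left solid inner Dunkl monogenic M_k of order k, every α > -1 and every positive integer t, C^α_{t,μ}(M_k) = (1-|x̱|²)^{-α} D_k^t[(1-|x̱|²)^{α+t} M_k]. -/

import Mathlib

open scoped BigOperators RealInnerProductSpace
open MeasureTheory

namespace CGDunkl

/-- The underlying Euclidean space `ℝ^m`. -/
abbrev V (m : ℕ) := EuclideanSpace ℝ (Fin m)

/-- The quadratic form `x ↦ -‖x‖²` on `ℝ^m`, whose Clifford algebra is `ℝ_{0,m}`
(so that `eᵢ eⱼ + eⱼ eᵢ = -2 δᵢⱼ`). -/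
noncomputable def Q (m : ℕ) : QuadraticForm ℝ (V m) :=
  - LinearMap.BilinMap.toQuadraticMap (innerₗ (V m))

/-- A (normed) model of the Clifford algebra `ℝ_{0,m}`: an `ℝ`-algebra isomorphism from
the Clifford algebra of `-‖·‖²` on `ℝ^m` to a normed algebra `A`. -/
abbrev CliffordModel (m : ℕ) (A : Type*) [NormedRing A] [NormedAlgebra ℝ A] :=
  CliffordAlgebra (Q m) ≃ₐ[ℝ] A

variable {m : ℕ} {A : Type*} [NormedRing A] [NormedAlgebra ℝ A]

/-- The Clifford generators `e_j`. -/
noncomputable def ee (F : CliffordModel m A) (j : Fin m) : A :=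
  F (CliffordAlgebra.ι (Q m) (EuclideanSpace.single j 1))

/-- The vector variable `x̱ = Σⱼ eⱼ xⱼ`. -/
noncomputable def xv (F : CliffordModel m A) (x : V m) : A :=
  F (CliffordAlgebra.ι (Q m) x)

/-- Clifford conjugation, the anti-involution with `conj eᵢ = -eᵢ`
(the composition of grade reversion and grade involution). -/
noncomputable def cconj (F : CliffordModel m A) (a : A) : A :=
  F (CliffordAlgebra.reverse (CliffordAlgebra.involute (F.symm a)))

/-- The reflection in the hyperplane orthogonal to `α`. -/
noncomputable def reflect {m : ℕ} (α x : V m) : V m :=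
  x - ((2 * ⟪α, x⟫) / ⟪α, α⟫) • α

/-- The data of a (reduced, normalized) root system `R = R₊ ∪ (-R₊)` in `ℝ^m`
together with a nonnegative `G`-invariant multiplicity function `κ`. -/
structure DunklData (m : ℕ) where
  /-- the root system -/
  R : Finset (V m)
  /-- the positive subsystem -/
  Rplus : Finset (V m)
  /-- the multiplicity function -/
  κ : V m → ℝ
  root_ne_zero : ∀ α ∈ R, α ≠ 0
  /-- normalization `⟨α, α⟩ = 2` -/
  norm_two : ∀ α ∈ R, ⟪α, α⟫ = (2 : ℝ)
  /-- the root system is reduced -/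
  reduced : ∀ α ∈ R, ∀ c : ℝ, c • α ∈ R → c = 1 ∨ c = -1
  /-- `R` is preserved by each reflection `r_α`, `α ∈ R` -/
  stable : ∀ α ∈ R, ∀ β ∈ R, reflect α β ∈ R
  /-- `R` is the union of `R₊` and `-R₊` -/
  split : ∀ α : V m, α ∈ R ↔ (α ∈ Rplus ∨ -α ∈ Rplus)
  pos_disjoint : ∀ α ∈ Rplus, -α ∉ Rplus
  /-- the multiplicity function is invariant under the reflection group -/
  invariant : ∀ α ∈ R, ∀ β ∈ R, κ (reflect α β) = κ β
  nonneg : ∀ α ∈ R, 0 ≤ κ α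

/-- `γ = Σ_{α ∈ R₊} κ_α`. -/
noncomputable def gammaK (D : DunklData m) : ℝ := ∑ α ∈ D.Rplus, D.κ α

/-- The Dunkl dimension `μ = m + 2γ`. -/
noncomputable def mu (D : DunklData m) : ℝ := m + 2 * gammaK D

/-- The Dunkl operator `T_i`, acting on functions with values in the Clifford algebra. -/
noncomputable def T (D : DunklData m) (i : Fin m) (f : V m → A) (x : V m) : A :=
  fderiv ℝ f x (EuclideanSpace.single i 1) +
    ∑ α ∈ D.Rplus, (D.κ α * (α i) / ⟪α, x⟫) • (f x - f (reflect α x))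

/-- The Dunkl Dirac operator `D_k = Σⱼ eⱼ T_j`. -/
noncomputable def Dirac (F : CliffordModel m A) (D : DunklData m) (f : V m → A) (x : V m) : A :=
  ∑ j : Fin m, ee F j * T D j f x

/-- The Dunkl Laplacian `Δ_k = Σᵢ Tᵢ²`. -/
noncomputable def Lap (D : DunklData m) (f : V m → A) (x : V m) : A :=
  ∑ i : Fin m, T D i (T D i f) x

/-- The Euler operator `𝔼 = Σᵢ xᵢ ∂_{xᵢ}`. -/
noncomputable def Euler (f : V m → A) (x : V m) : A := fderiv ℝ f x x

/-- The angular Dunkl Dirac operator (Gamma operator) `Γ_k = D_k x̱ + μ + 𝔼`. -/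
noncomputable def Gam (F : CliffordModel m A) (D : DunklData m) (f : V m → A) (x : V m) : A :=
  Dirac F D (fun y => xv F y * f y) x + mu D • f x + Euler f x

/-- The regular set: the complement of the hyperplane arrangement, where the pointwise
formula for the Dunkl operators is valid. -/
def Reg (D : DunklData m) : Set (V m) := {x | ∀ α ∈ D.Rplus, ⟪α, x⟫ ≠ 0}

/-- Left solid inner Dunkl monogenic of order `k`: a smooth function, homogeneous (as a
polynomial) of degree `k`, with `D_k M = 0`. -/
def IsInner (F : CliffordModel m A) (D : DunklData m) (k : ℕ) (M : V m → A) : Prop :=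
  ContDiff ℝ ⊤ M ∧ (∀ (c : ℝ) (x : V m), M (c • x) = c ^ k • M x) ∧
    ∀ x ∈ Reg D, Dirac F D M x = 0

/-- Left solid outer Dunkl monogenic of order `k`: left Dunkl monogenic on `ℝ^m ∖ {0}` and
homogeneous of degree `-(k + μ - 1)`. -/
def IsOuter (F : CliffordModel m A) (D : DunklData m) (k : ℕ) (Qf : V m → A) : Prop :=
  ContDiffOn ℝ ⊤ Qf {x | x ≠ 0} ∧
    (∀ c : ℝ, 0 < c → ∀ x : V m, x ≠ 0 →
      Qf (c • x) = ((c : ℝ) ^ (-((k : ℝ) + mu D - 1)) : ℝ) • Qf x) ∧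
    ∀ x ∈ Reg D, x ≠ 0 → Dirac F D Qf x = 0

/-- The weight function `w_k(x) = Π_{α ∈ R₊} |⟨x, α⟩|^{2 κ_α}`. -/
noncomputable def w (D : DunklData m) (x : V m) : ℝ :=
  ∏ α ∈ D.Rplus, |⟪x, α⟫| ^ (2 * D.κ α)


variable {m : ℕ} {A : Type*} [NormedRing A] [NormedAlgebra ℝ A]

/-- The operator `D_α = (1-|x̱|²) D_k - 2(α+1) x̱` on the unit ball. -/
noncomputable def Dal (F : CliffordModel m A) (D : DunklData m) (a : ℝ)
    (f : V m → A) (x : V m) : A :=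
  (1 - ‖x‖ ^ 2) • Dirac F D f x - (2 * (a + 1)) • (xv F x * f x)

/-- The Clifford-Gegenbauer polynomials on `B(1)`:
`C^α_{t,μ}(M_k) = D_α D_{α+1} ⋯ D_{α+t-1}[M_k]` (with `C^α_{0,μ}(M_k) = M_k`). -/
noncomputable def CG (F : CliffordModel m A) (D : DunklData m) :
    ℝ → ℕ → (V m → A) → (V m → A)
  | _, 0, M => M
  | a, t + 1, M => Dal F D a (CG F D (a + 1) t M)

/-! The weight `(1 - |x|²)^β` is invariant under the reflections, so the Dunkl Dirac operator obeys
the ordinary product rule with it: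
`D_k[(1-|x|²)^β f] = -2β (1-|x|²)^{β-1} x̱ f + (1-|x|²)^β D_k f`.
For `β = -(α+1)` the `x̱`-term cancels the one in `D_α`, so that
`D_α[(1-|x|²)^{-α-1} H] = (1-|x|²)^{-α} D_k H`, and the formula follows by induction on `t`,
applied with `α + 1` in place of `α`. -/

lemma reflect_eq_sub_inner_smul {α : V m} (hα : ⟪α, α⟫ = (2 : ℝ)) (x : V m) :
    reflect α x = x - ⟪α, x⟫ • α := by
  rw [reflect, hα, mul_div_cancel_left₀ _ two_ne_zero]

lemma norm_reflect {α : V m} (hα : ⟪α, α⟫ = (2 : ℝ)) (x : V m) : ‖reflect α x‖ = ‖x‖ := by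
  have h : ‖reflect α x‖ ^ 2 = ‖x‖ ^ 2 := by
    rw [reflect_eq_sub_inner_smul hα, ← real_inner_self_eq_norm_sq,
      ← real_inner_self_eq_norm_sq]
    simp only [inner_sub_left, inner_sub_right, real_inner_smul_left, real_inner_smul_right, hα,
      real_inner_comm α x]
    ring
  exact (pow_left_inj₀ (norm_nonneg _) (norm_nonneg _) two_ne_zero).1 h

lemma inner_reflect {α : V m} (hα : ⟪α, α⟫ = (2 : ℝ)) (β x : V m) :
    ⟪β, reflect α x⟫ = ⟪reflect α β, x⟫ := by
  simp only [reflect_eq_sub_inner_smul hα, inner_sub_left, inner_sub_right, real_inner_smul_left,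
    real_inner_smul_right, real_inner_comm α β]
  ring

lemma contDiff_reflect (α : V m) : ContDiff ℝ ⊤ (reflect α) :=
  contDiff_id.sub
    (((contDiff_const.mul (contDiff_const.inner ℝ contDiff_id)).div_const _).smul contDiff_const)

namespace DunklData

variable (D : DunklData m)

lemma inner_self_of_mem_Rplus {α : V m} (hα : α ∈ D.Rplus) : ⟪α, α⟫ = (2 : ℝ) :=
  D.norm_two α ((D.split α).2 (Or.inl hα))

lemma isOpen_Reg : IsOpen (Reg D) := by
  have h : Reg D = ⋂ α ∈ D.Rplus, {x : V m | ⟪α, x⟫ ≠ 0} := by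
    ext x; simp [Reg]
  rw [h]
  exact isOpen_biInter_finset fun α _ => isOpen_ne.preimage (continuous_const.inner continuous_id)

/-- Reflections permute `R = R₊ ∪ (-R₊)`, so they permute the hyperplanes `⟪β, x⟫ = 0`. -/
lemma mapsTo_reflect_Reg {α : V m} (hα : α ∈ D.Rplus) :
    Set.MapsTo (reflect α) (Reg D) (Reg D) := by
  intro x hx β hβ
  have hαR : α ∈ D.R := (D.split α).2 (Or.inl hα)
  rw [inner_reflect (D.inner_self_of_mem_Rplus hα)]
  rcases (D.split _).1 (D.stable α hαR β ((D.split β).2 (Or.inl hβ))) with h | h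
  · exact hx _ h
  · simpa [inner_neg_left] using hx _ h

lemma mapsTo_reflect_ball_inter_Reg {α : V m} (hα : α ∈ D.Rplus) :
    Set.MapsTo (reflect α) (Metric.ball 0 1 ∩ Reg D) (Metric.ball 0 1 ∩ Reg D) := by
  intro x hx
  refine ⟨?_, D.mapsTo_reflect_Reg hα hx.2⟩
  simpa [norm_reflect (D.inner_self_of_mem_Rplus hα)] using hx.1

end DunklData

section DunklOperators

variable (F : CliffordModel m A) (D : DunklData m)

lemma xv_eq_sum (x : V m) : xv F x = ∑ j, x j • ee F j := by
  conv_lhs => rw [← (EuclideanSpace.basisFun (Fin m) ℝ).sum_repr x]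
  simp [xv, ee, map_sum]

lemma T_congr {U : Set (V m)} (hU : IsOpen U) (hUr : ∀ α ∈ D.Rplus, Set.MapsTo (reflect α) U U)
    {f g : V m → A} (hfg : Set.EqOn f g U) {x : V m} (hx : x ∈ U) (i : Fin m) :
    T D i f x = T D i g x := by
  rw [T, T, (Filter.eventuallyEq_of_mem (hU.mem_nhds hx) hfg).fderiv_eq]
  congr 1
  refine Finset.sum_congr rfl fun α hα => ?_
  rw [hfg hx, hfg (hUr α hα hx)]

lemma Dirac_congr {U : Set (V m)} (hU : IsOpen U)
    (hUr : ∀ α ∈ D.Rplus, Set.MapsTo (reflect α) U U)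
    {f g : V m → A} (hfg : Set.EqOn f g U) {x : V m} (hx : x ∈ U) :
    Dirac F D f x = Dirac F D g x :=
  Finset.sum_congr rfl fun j _ => by rw [T_congr D hU hUr hfg hx j]

lemma contDiffOn_T {U : Set (V m)} (hU : IsOpen U) (hUreg : U ⊆ Reg D)
    (hUr : ∀ α ∈ D.Rplus, Set.MapsTo (reflect α) U U)
    {f : V m → A} (hf : ContDiffOn ℝ ⊤ f U) (i : Fin m) : ContDiffOn ℝ ⊤ (T D i f) U := by
  refine ((hf.fderiv_of_isOpen hU (by simp)).clm_apply contDiffOn_const).add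
    (ContDiffOn.sum fun α hα => ?_)
  have hcoeff : ContDiffOn ℝ ⊤ (fun x : V m => D.κ α * α i / ⟪α, x⟫) U :=
    contDiffOn_const.div (contDiff_const.inner ℝ contDiff_id).contDiffOn
      fun x hx => hUreg hx α hα
  exact hcoeff.smul (hf.sub (hf.comp (contDiff_reflect α).contDiffOn (hUr α hα)))

lemma contDiffOn_iterate_Dirac {U : Set (V m)} (hU : IsOpen U) (hUreg : U ⊆ Reg D)
    (hUr : ∀ α ∈ D.Rplus, Set.MapsTo (reflect α) U U)
    {f : V m → A} (hf : ContDiffOn ℝ ⊤ f U) (t : ℕ) :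
    ContDiffOn ℝ ⊤ ((Dirac F D)^[t] f) U := by
  induction t with
  | zero => exact hf
  | succ t ih =>
    rw [Function.iterate_succ_apply']
    exact ContDiffOn.sum fun j _ => contDiffOn_const.mul (contDiffOn_T D hU hUreg hUr ih j)

lemma T_smul_apply {g : V m → ℝ} {f : V m → A} {x : V m} (hg : DifferentiableAt ℝ g x)
    (hf : DifferentiableAt ℝ f x) (hgr : ∀ α ∈ D.Rplus, g (reflect α x) = g x) (i : Fin m) :
    T D i (fun y => g y • f y) x =
      fderiv ℝ g x (EuclideanSpace.single i 1) • f x + g x • T D i f x := by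
  rw [T, T, fderiv_fun_smul hg hf, smul_add, Finset.smul_sum]
  have hdiff : ∀ α ∈ D.Rplus,
      (D.κ α * α i / ⟪α, x⟫) • (g x • f x - g (reflect α x) • f (reflect α x)) =
        g x • (D.κ α * α i / ⟪α, x⟫) • (f x - f (reflect α x)) := fun α hα => by
    rw [hgr α hα, ← smul_sub, smul_comm]
  rw [Finset.sum_congr rfl hdiff]
  simp only [_root_.add_apply, ContinuousLinearMap.smulRight_apply, FunLike.coe_smul,
    Pi.smul_apply]
  abel

lemma Dirac_smul_apply {g : V m → ℝ} {f : V m → A} {x : V m} (hg : DifferentiableAt ℝ g x)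
    (hf : DifferentiableAt ℝ f x) (hgr : ∀ α ∈ D.Rplus, g (reflect α x) = g x) :
    Dirac F D (fun y => g y • f y) x =
      (∑ j, fderiv ℝ g x (EuclideanSpace.single j 1) • ee F j) * f x + g x • Dirac F D f x := by
  simp only [Dirac, T_smul_apply D hg hf hgr, mul_add, Finset.sum_add_distrib, Finset.sum_mul,
    Finset.smul_sum, smul_mul_assoc, mul_smul_comm]

end DunklOperators

section Weight

variable (F : CliffordModel m A) (D : DunklData m)

lemma one_sub_norm_sq_pos {x : V m} (hx : x ∈ Metric.ball (0 : V m) 1) :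
    0 < 1 - ‖x‖ ^ 2 := by
  rw [mem_ball_zero_iff] at hx
  nlinarith [norm_nonneg x]

lemma hasFDerivAt_rpow_one_sub_norm_sq (β : ℝ) {x : V m} (hx : x ∈ Metric.ball (0 : V m) 1) :
    HasFDerivAt (fun y : V m => (1 - ‖y‖ ^ 2) ^ β)
      ((-2 * β * (1 - ‖x‖ ^ 2) ^ (β - 1)) • innerSL ℝ x) x := by
  have hsq : HasFDerivAt (fun y : V m => 1 - ‖y‖ ^ 2) (-(2 : ℝ) • innerSL ℝ x) x :=
    ((hasFDerivAt_const (1 : ℝ) x).sub (hasStrictFDerivAt_norm_sq x).hasFDerivAt).congr_fderiv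
      (by ext; simp)
  refine ((Real.hasDerivAt_rpow_const (p := β)
    (Or.inl (one_sub_norm_sq_pos hx).ne')).comp_hasFDerivAt x hsq).congr_fderiv ?_
  rw [smul_smul]
  ring_nf

lemma contDiffOn_rpow_one_sub_norm_sq (β : ℝ) :
    ContDiffOn ℝ ⊤ (fun y : V m => (1 - ‖y‖ ^ 2) ^ β) (Metric.ball 0 1) := fun x hx =>
  ((Real.contDiffAt_rpow_const_of_ne (one_sub_norm_sq_pos hx).ne').comp x
    (contDiff_const.sub (contDiff_norm_sq ℝ)).contDiffAt).contDiffWithinAt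

lemma Dirac_rpow_smul_apply (β : ℝ) {f : V m → A} {x : V m}
    (hx : x ∈ Metric.ball 0 1 ∩ Reg D) (hf : DifferentiableAt ℝ f x) :
    Dirac F D (fun y => (1 - ‖y‖ ^ 2) ^ β • f y) x =
      (-2 * β * (1 - ‖x‖ ^ 2) ^ (β - 1)) • (xv F x * f x) +
        (1 - ‖x‖ ^ 2) ^ β • Dirac F D f x := by
  have hg := hasFDerivAt_rpow_one_sub_norm_sq β hx.1
  rw [Dirac_smul_apply F D hg.differentiableAt hf fun α hα => by
    rw [norm_reflect (D.inner_self_of_mem_Rplus hα)], hg.fderiv, xv_eq_sum, ← smul_mul_assoc,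
    Finset.smul_sum]
  congr 2
  refine Finset.sum_congr rfl fun j _ => ?_
  simp [smul_smul, EuclideanSpace.inner_single_right]

end Weight

lemma Dal_rpow_smul_apply (F : CliffordModel m A) (D : DunklData m) (a : ℝ) {H : V m → A}
    (hH : ContDiffOn ℝ ⊤ H (Metric.ball 0 1 ∩ Reg D)) {x : V m}
    (hx : x ∈ Metric.ball 0 1 ∩ Reg D) :
    Dal F D a (fun y => (1 - ‖y‖ ^ 2) ^ (-(a + 1)) • H y) x =
      (1 - ‖x‖ ^ 2) ^ (-a) • Dirac F D H x := by
  have hU : IsOpen (Metric.ball (0 : V m) 1 ∩ Reg D) := Metric.isOpen_ball.inter D.isOpen_Reg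
  have hs : 1 - ‖x‖ ^ 2 ≠ 0 := (one_sub_norm_sq_pos hx.1).ne'
  rw [Dal, Dirac_rpow_smul_apply F D _ hx
    ((hH.contDiffAt (hU.mem_nhds hx)).differentiableAt (by simp)), Real.rpow_sub_one hs,
    show -a = -(a + 1) + 1 by ring, Real.rpow_add_one hs, mul_smul_comm, smul_add, smul_smul,
    smul_smul, smul_smul]
  rw [show (1 - ‖x‖ ^ 2) * (-2 * -(a + 1) * ((1 - ‖x‖ ^ 2) ^ (-(a + 1)) / (1 - ‖x‖ ^ 2))) =
    2 * (a + 1) * (1 - ‖x‖ ^ 2) ^ (-(a + 1)) by field_simp, mul_comm (1 - ‖x‖ ^ 2)]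
  exact add_sub_cancel_left _ _

theorem CG_eq_rpow_smul_iterate_Dirac (F : CliffordModel m A) (D : DunklData m) {M : V m → A}
    (hM : ContDiff ℝ ⊤ M) (t : ℕ) (a : ℝ) {x : V m} (hx : x ∈ Metric.ball 0 1 ∩ Reg D) :
    CG F D a t M x =
      (1 - ‖x‖ ^ 2) ^ (-a) • (Dirac F D)^[t] (fun y => (1 - ‖y‖ ^ 2) ^ (a + t) • M y) x := by
  induction t generalizing a x with
  | zero =>
    have hs := one_sub_norm_sq_pos hx.1
    rw [CG, Function.iterate_zero_apply, Nat.cast_zero, add_zero, smul_smul,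
      ← Real.rpow_add hs, neg_add_cancel, Real.rpow_zero, one_smul]
  | succ t ih =>
    set U := Metric.ball (0 : V m) 1 ∩ Reg D
    have hU : IsOpen U := Metric.isOpen_ball.inter D.isOpen_Reg
    have hUr : ∀ α ∈ D.Rplus, Set.MapsTo (reflect α) U U :=
      fun α hα => D.mapsTo_reflect_ball_inter_Reg hα
    set N : V m → A := fun y => (1 - ‖y‖ ^ 2) ^ (a + 1 + t) • M y
    have hN : ContDiffOn ℝ ⊤ N U :=
      ((contDiffOn_rpow_one_sub_norm_sq _).mono Set.inter_subset_left).smul hM.contDiffOn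
    have hCG : Set.EqOn (CG F D (a + 1) t M)
        (fun y => (1 - ‖y‖ ^ 2) ^ (-(a + 1)) • (Dirac F D)^[t] N y) U :=
      fun y hy => ih (a + 1) hy
    have hDal : Dal F D a (CG F D (a + 1) t M) x =
        Dal F D a (fun y => (1 - ‖y‖ ^ 2) ^ (-(a + 1)) • (Dirac F D)^[t] N y) x := by
      rw [Dal, Dal, Dirac_congr F D hU hUr hCG hx, hCG hx]
    have hexp : a + ((t + 1 : ℕ) : ℝ) = a + 1 + t := by push_cast; ring
    rw [CG, hDal, Dal_rpow_smul_apply F D a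
      (contDiffOn_iterate_Dirac F D hU Set.inter_subset_right hUr hN t) hx, hexp,
      Function.iterate_succ_apply']

theorem cg_rodrigues_general
    {m : ℕ} {A : Type*} [NormedRing A] [NormedAlgebra ℝ A]
    (F : CliffordModel m A) (D : DunklData m)
    (k : ℕ) (M : V m → A) (hM : IsInner F D k M)
    (α : ℝ) (t : ℕ) :
    ∀ x ∈ Metric.ball (0 : V m) 1 ∩ Reg D,
      CG F D α t M x =
        ((1 - ‖x‖ ^ 2) ^ (-α) : ℝ) •
          (Dirac F D)^[t] (fun y => ((1 - ‖y‖ ^ 2) ^ (α + t) : ℝ) • M y) x :=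
  fun _ hx => CG_eq_rpow_smul_iterate_Dirac F D hM.1 t α hx

/-- Rodrigues formula on `B(1)`: for every left solid inner Dunkl
monogenic `M_k` of order `k`, every `α > -1` and every positive integer `t`,
`C^α_{t,μ}(M_k) = (1-|x̱|²)^{-α} D_k^t[(1-|x̱|²)^{α+t} M_k]`. -/
theorem cg_rodrigues
    {m : ℕ} {A : Type*} [NormedRing A] [NormedAlgebra ℝ A]
    (F : CliffordModel m A) (D : DunklData m)
    (k : ℕ) (M : V m → A) (hM : IsInner F D k M)
    (α : ℝ) (hα : -1 < α) (t : ℕ) (ht : 1 ≤ t) :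
    ∀ x ∈ Metric.ball (0 : V m) 1 ∩ Reg D,
      CG F D α t M x =
        ((1 - ‖x‖ ^ 2) ^ (-α) : ℝ) •
          (Dirac F D)^[t] (fun y => ((1 - ‖y‖ ^ 2) ^ (α + t) : ℝ) • M y) x :=
  cg_rodrigues_general F D k M hM α t

end CGDunkl
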